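/- arXiv:1409.3418 — 2 statements merged into one kernel-verified Lean document; each statement's English description precedes it below -/
import Mathlib

section
/- Let E ⊆ [0,∞) with 0 ∈ E be such that 0 is an accumulation point of E, and regard E as a pointed metric space with the metric induced from ℝ and marked point 0. If R*_n(E,0) < ∞, then E is completely strongly porous at 0. -/
/-!
Fix `c > R*_n(E,0)` and `τ ∈ Ẽ₀ᵈ(E)`. Points `e ∈ E` with `c τₙ ≤ e ≤ M τₙ` cannot occur for
infinitely many `n`: along a subsequence where `e / τₙ` converges, `τ` is a normal scaling
sequence (witnessed by the points `τₙ` themselves) realizing a limit `≥ c`. Hence the gap of `E`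
containing `c τₙ` has its left end in `[τₙ, c τₙ]` and its right end eventually beyond every
`M τₙ`; these gaps witness the `τ`-strong porosity of `E`.
-/

open Filter Topology Set
open scoped ENNReal

/-- A scaling sequence: strictly positive reals tending to zero. -/
def ScalingSeq (r : ℕ → ℝ) : Prop :=
  (∀ n, 0 < r n) ∧ Tendsto r atTop (𝓝 (0 : ℝ))

/-- Two sequences of points are mutually stable w.r.t. a scaling sequence. -/
def MutuallyStable {X : Type*} [MetricSpace X] (r : ℕ → ℝ) (x y : ℕ → X) : Prop :=
  ∃ L : ℝ, Tendsto (fun n => dist (x n) (y n) / r n) atTop (𝓝 L)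

/-- A family of sequences is self-stable w.r.t. a scaling sequence. -/
def SelfStable {X : Type*} [MetricSpace X] (r : ℕ → ℝ) (F : Set (ℕ → X)) : Prop :=
  ∀ x ∈ F, ∀ y ∈ F, MutuallyStable r x y

/-- A maximal self-stable family. -/
def MaxSelfStable {X : Type*} [MetricSpace X] (r : ℕ → ℝ) (F : Set (ℕ → X)) : Prop :=
  SelfStable r F ∧ ∀ G : Set (ℕ → X), SelfStable r G → F ⊆ G → G = F

/-- A sequence of reals is eventually decreasing. -/
def EvDecr (τ : ℕ → ℝ) : Prop := ∀ᶠ n in atTop, τ (n + 1) ≤ τ n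

/-- A normal scaling sequence for a pointed metric space `(X, d, p)`. -/
def NormalScaling {X : Type*} [MetricSpace X] (p : X) (r : ℕ → ℝ) : Prop :=
  ScalingSeq r ∧ EvDecr r ∧
    ∃ x : ℕ → X, Tendsto (fun n => dist (x n) p / r n) atTop (𝓝 (1 : ℝ))

/-- The set `Ẽ₀ᵈ(E)` of eventually decreasing sequences of nonzero points of `E`
tending to zero. -/
def E0d (E : Set ℝ) : Set (ℕ → ℝ) :=
  {τ | EvDecr τ ∧ (∀ n, τ n ∈ E \ {0}) ∧ Tendsto τ atTop (𝓝 (0 : ℝ))}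

/-- `Ioo a b` is a connected component of the interior of `[0,∞) \ E`. -/
def IsCompExt (E : Set ℝ) (a b : ℝ) : Prop :=
  a < b ∧ Ioo a b ⊆ interior (Ici 0 \ E) ∧
    ∀ a' b' : ℝ, a' ≤ a → b ≤ b' → Ioo a' b' ⊆ interior (Ici 0 \ E) → a' = a ∧ b' = b

/-- The set `Ĩ_E^d` of sequences of intervals. -/
def IEd (E : Set ℝ) (a b : ℕ → ℝ) : Prop :=
  (∀ n, IsCompExt E (a n) (b n)) ∧ EvDecr a ∧ Tendsto a atTop (𝓝 (0 : ℝ)) ∧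
    Tendsto (fun n => (b n - a n) / b n) atTop (𝓝 (1 : ℝ))

/-- The equivalence `x ≍ y` for sequences of strictly positive numbers. -/
def Asymp (x y : ℕ → ℝ) : Prop :=
  ∃ c₁ c₂ : ℝ, 0 < c₁ ∧ 0 < c₂ ∧ ∀ n, c₁ * x n < y n ∧ y n < c₂ * x n

/-- `E` is `τ`-strongly porous at `0`. -/
def TPorous (E : Set ℝ) (τ : ℕ → ℝ) : Prop :=
  ∃ a b : ℕ → ℝ, IEd E a b ∧ Asymp τ a

/-- `E` is completely strongly porous at `0`. -/
def CSP (E : Set ℝ) : Prop := ∀ τ ∈ E0d E, TPorous E τ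

/-- The relation `⪯` (on the first components of members of `Ĩ_E^d`). -/
def Preceq (a l : ℕ → ℝ) : Prop :=
  ∃ (N₁ : ℕ) (f : ℕ → ℕ), ∀ n ≥ N₁, a n = l (f n)

/-- `(l, m)` is a universal element of `Ĩ_E^d`. -/
def UnivElem (E : Set ℝ) (l m : ℕ → ℝ) : Prop :=
  IEd E l m ∧ ∀ a b : ℕ → ℝ, IEd E a b → Preceq a l

/-- The quantity `M(L̃) = limsup lₙ / m_{n+1}`, valued in `[0,∞]`. -/
noncomputable def MQ (l m : ℕ → ℝ) : ℝ≥0∞ :=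
  Filter.limsup (fun n => ENNReal.ofReal (l n / m (n + 1))) atTop

/-- The quantity `C(τ̃)`, valued in `[0,∞]` (inf of the empty set is `∞`). -/
noncomputable def Ctau (E : Set ℝ) (τ : ℕ → ℝ) : ℝ≥0∞ :=
  sInf {v | ∃ a b : ℕ → ℝ, IEd E a b ∧ (∀ᶠ n in atTop, τ n ≤ a n) ∧
    v = Filter.limsup (fun n => ENNReal.ofReal (a n / τ n)) atTop}

/-- The quantity `C_E`, valued in `[0,∞]`. -/
noncomputable def CE (E : Set ℝ) : ℝ≥0∞ :=
  sSup {v | ∃ τ ∈ E0d E, v = Ctau E τ}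

/-- The distance set `S_p(X) = {d(x,p) : x ∈ X}`. -/
def SpSet (X : Type*) [MetricSpace X] (p : X) : Set ℝ := {t | ∃ x : X, t = dist x p}

/-- `R*_n(X,p)`: the supremum, over normal scaling sequences `r` and sequences `x` in `X`
for which the finite limit `lim d(xₙ,p)/rₙ` exists, of this limit, in `[0,∞]`
(sup of the empty set is `0`). -/
noncomputable def RstarN (X : Type*) [MetricSpace X] (p : X) : ℝ≥0∞ :=
  sSup {v | ∃ (r : ℕ → ℝ) (x : ℕ → X) (L : ℝ), NormalScaling p r ∧
    Tendsto (fun n => dist (x n) p / r n) atTop (𝓝 L) ∧ v = ENNReal.ofReal L}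

/-- `Rⁿ_*(X,p)`: the corresponding infimum over strictly positive such limits, in `[0,∞]`
(inf of the empty set is `∞`). -/
noncomputable def RlowN (X : Type*) [MetricSpace X] (p : X) : ℝ≥0∞ :=
  sInf {v | ∃ (r : ℕ → ℝ) (x : ℕ → X) (L : ℝ), NormalScaling p r ∧
    Tendsto (fun n => dist (x n) p / r n) atTop (𝓝 L) ∧ 0 < L ∧ v = ENNReal.ofReal L}

/-- `λ(E,0,h)`: the length of the largest open subinterval of `(0,h)` containing
no point of `E`. -/
noncomputable def lamE (E : Set ℝ) (h : ℝ) : ℝ :=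
  sSup {d | ∃ a b : ℝ, 0 ≤ a ∧ a ≤ b ∧ b ≤ h ∧ Ioo a b ∩ E = ∅ ∧ d = b - a}

/-- `E` is strongly porous at `0`: the right upper porosity `p⁺(E,0)` equals `1`. -/
def StronglyPorousAtZero (E : Set ℝ) : Prop :=
  Filter.limsup (fun h => lamE E h / h) (𝓝[>] (0 : ℝ)) = 1

lemma EvDecr.comp_strictMono {u : ℕ → ℝ} (hu : EvDecr u) {φ : ℕ → ℕ} (hφ : StrictMono φ) :
    EvDecr (u ∘ φ) := by
  obtain ⟨N, hN⟩ := eventually_atTop.1 hu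
  have hanti := antitoneOn_nat_Ici_of_succ_le hN
  filter_upwards [eventually_ge_atTop N] with k hk
  exact hanti (le_trans hk hφ.le_apply) (le_trans hk (hφ.le_apply.trans (hφ.monotone k.le_succ)))
    (hφ.monotone k.le_succ)

lemma le_toReal_rstarN {X : Type*} [MetricSpace X] {p : X} (hfin : RstarN X p < ⊤)
    {r : ℕ → ℝ} (hr : NormalScaling p r) {x : ℕ → X} {L : ℝ}
    (hx : Tendsto (fun n => dist (x n) p / r n) atTop (𝓝 L)) :
    L ≤ (RstarN X p).toReal := by
  rcases le_or_gt L 0 with hL | hL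
  · exact hL.trans ENNReal.toReal_nonneg
  · have hle : ENNReal.ofReal L ≤ RstarN X p := le_sSup ⟨r, x, L, hr, hx, rfl⟩
    simpa [ENNReal.toReal_ofReal hL.le] using ENNReal.toReal_mono hfin.ne hle

lemma eventually_dist_notMem_Icc {X : Type*} [MetricSpace X] {p : X} (hfin : RstarN X p < ⊤)
    {x : ℕ → X} (hpos : ∀ n, 0 < dist (x n) p) (hdec : EvDecr fun n => dist (x n) p)
    (hlim : Tendsto (fun n => dist (x n) p) atTop (𝓝 0)) {c : ℝ} (hc : (RstarN X p).toReal < c)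
    (M : ℝ) :
    ∀ᶠ n in atTop, ∀ y : X, dist y p ∉ Icc (c * dist (x n) p) (M * dist (x n) p) := by
  set r := fun n => dist (x n) p
  by_contra hcon
  simp only [not_eventually, not_forall, not_not] at hcon
  obtain ⟨σ, hσ, hσy⟩ := extraction_of_frequently_atTop hcon
  choose y hy using hσy
  have hratio : ∀ k, dist (y k) p / r (σ k) ∈ Icc c M := fun k =>
    ⟨(le_div_iff₀ (hpos _)).2 (hy k).1, (div_le_iff₀ (hpos _)).2 (hy k).2⟩
  obtain ⟨L, hL, φ, hφ, hconv⟩ := isCompact_Icc.tendsto_subseq hratio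
  have hψ : StrictMono (σ ∘ φ) := hσ.comp hφ
  have hnormal : NormalScaling p (r ∘ σ ∘ φ) := by
    refine ⟨⟨fun k => hpos _, hlim.comp hψ.tendsto_atTop⟩, hdec.comp_strictMono hψ,
      x ∘ σ ∘ φ, tendsto_const_nhds.congr fun k => ?_⟩
    exact (div_self (hpos _).ne').symm
  have := le_toReal_rstarN hfin hnormal (x := y ∘ φ) hconv
  linarith [hL.1]

/-- `(lowerGapEnd E h, upperGapEnd E h)` is the gap of `E` containing `h` when `h ∉ closure E`. -/
noncomputable def lowerGapEnd (E : Set ℝ) (h : ℝ) : ℝ := sSup (E ∩ Iic h)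

noncomputable def upperGapEnd (E : Set ℝ) (h : ℝ) : ℝ := sInf (E ∩ Ici h)

section GapEnds

variable {E : Set ℝ} {h : ℝ}

lemma le_lowerGapEnd {t : ℝ} (ht : t ∈ E) (hth : t ≤ h) : t ≤ lowerGapEnd E h :=
  le_csSup (bddAbove_Iic.mono inter_subset_right) ⟨ht, hth⟩

lemma lowerGapEnd_le (hne : (E ∩ Iic h).Nonempty) : lowerGapEnd E h ≤ h :=
  csSup_le hne fun _ hx => hx.2

lemma lowerGapEnd_mono {h' : ℝ} (hne : (E ∩ Iic h).Nonempty) (hh : h ≤ h') :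
    lowerGapEnd E h ≤ lowerGapEnd E h' :=
  csSup_le_csSup (bddAbove_Iic.mono inter_subset_right) hne
    (inter_subset_inter_right _ (Iic_subset_Iic.2 hh))

lemma le_upperGapEnd {H : ℝ} (hne : (E ∩ Ici h).Nonempty) (hH : ∀ e ∈ E, e ∉ Icc h H) :
    H ≤ upperGapEnd E h :=
  le_csInf hne fun e he => (not_le.1 (not_and.1 (hH e he.1) he.2)).le

lemma isCompExt_lowerGapEnd_upperGapEnd (hE : E ⊆ Ici 0) (hlo : (E ∩ Iic h).Nonempty)
    (hhi : (E ∩ Ici h).Nonempty) (hlt : lowerGapEnd E h < upperGapEnd E h) :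
    IsCompExt E (lowerGapEnd E h) (upperGapEnd E h) := by
  have hbdd : BddBelow (E ∩ Ici h) := bddBelow_Ici.mono inter_subset_right
  have hgap : ∀ x ∈ Ioo (lowerGapEnd E h) (upperGapEnd E h), x ∉ E := by
    intro x hx hxE
    rcases le_total x h with hxh | hxh
    · exact not_lt_of_ge (le_lowerGapEnd hxE hxh) hx.1
    · exact not_lt_of_ge (csInf_le hbdd ⟨hxE, hxh⟩) hx.2
  have hnonneg : 0 ≤ lowerGapEnd E h := by
    obtain ⟨t, ht⟩ := hlo
    exact (hE ht.1).trans (le_lowerGapEnd ht.1 ht.2)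
  refine ⟨hlt, interior_maximal (fun x hx => ⟨hnonneg.trans hx.1.le, hgap x hx⟩) isOpen_Ioo, ?_⟩
  intro a' b' ha' hb' hsub
  have hsubE : ∀ x ∈ Ioo a' b', x ∉ E := fun x hx => (interior_subset (hsub hx)).2
  constructor
  · refine ha'.antisymm (not_lt.1 fun hlt' => ?_)
    obtain ⟨e, he, hae⟩ := exists_lt_of_lt_csSup hlo hlt'
    exact hsubE e ⟨hae, (le_lowerGapEnd he.1 he.2).trans_lt (hlt.trans_le hb')⟩ he.1
  · refine (not_lt.1 fun hlt' => ?_).antisymm hb'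
    obtain ⟨e, he, hea⟩ := exists_lt_of_csInf_lt hhi hlt'
    exact hsubE e ⟨(ha'.trans_lt hlt).trans_le (csInf_le hbdd he), hea⟩ he.1

end GapEnds

lemma asymp_of_eventually {x y : ℕ → ℝ} (hx : ∀ n, 0 < x n) (hy : ∀ n, 0 < y n)
    {c₁ c₂ : ℝ} (hc₁ : 0 < c₁) (h : ∀ᶠ n in atTop, c₁ * x n ≤ y n ∧ y n ≤ c₂ * x n) :
    Asymp x y := by
  obtain ⟨N, hN⟩ := eventually_atTop.1 h
  set ρ := fun n => y n / x n
  have hρpos : ∀ n, 0 < ρ n := fun n => div_pos (hy n) (hx n)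
  obtain ⟨i, -, hi⟩ := (Finset.range (N + 1)).exists_min_image ρ ⟨N, by simp⟩
  obtain ⟨j, -, hj⟩ := (Finset.range (N + 1)).exists_max_image ρ ⟨N, by simp⟩
  have hρ : ∀ n, min c₁ (ρ i) ≤ ρ n ∧ ρ n ≤ max c₂ (ρ j) := by
    intro n
    rcases lt_or_ge n N with hn | hn
    · exact ⟨min_le_of_right_le (hi n (Finset.mem_range.2 (by omega))),
        le_max_of_le_right (hj n (Finset.mem_range.2 (by omega)))⟩
    · exact ⟨min_le_of_left_le ((le_div_iff₀ (hx n)).2 (hN n hn).1),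
        le_max_of_le_left ((div_le_iff₀ (hx n)).2 (hN n hn).2)⟩
  have hmin : 0 < min c₁ (ρ i) := lt_min hc₁ (hρpos i)
  have hmax : 0 < max c₂ (ρ j) := lt_max_of_lt_right (hρpos j)
  refine ⟨min c₁ (ρ i) / 2, 2 * max c₂ (ρ j), by positivity, by positivity, fun n => ?_⟩
  exact ⟨(lt_div_iff₀ (hx n)).1 (by linarith [(hρ n).1]),
    (div_lt_iff₀ (hx n)).1 (by linarith [(hρ n).2])⟩

/- Freezing the intervals before the index `N` after which they are gaps makes them gaps for
every `n` without affecting any asymptotic property. -/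
lemma tPorous_of_eventually {E : Set ℝ} {τ a b : ℕ → ℝ} (hτ : ∀ n, 0 < τ n)
    (hcomp : ∀ᶠ n in atTop, IsCompExt E (a n) (b n)) (hdec : EvDecr a)
    (ha : Tendsto a atTop (𝓝 0)) (hratio : Tendsto (fun n => (b n - a n) / b n) atTop (𝓝 1))
    {c₁ c₂ : ℝ} (hc₁ : 0 < c₁) (hbound : ∀ᶠ n in atTop, c₁ * τ n ≤ a n ∧ a n ≤ c₂ * τ n) :
    TPorous E τ := by
  obtain ⟨N, hN⟩ := eventually_atTop.1 (hcomp.and hbound)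
  have hshift : Tendsto (fun n => max n N) atTop atTop := tendsto_atTop_atTop_of_monotone
    (fun _ _ h => max_le_max h le_rfl) fun n => ⟨n, le_max_left n N⟩
  have heq : ∀ᶠ n in atTop, max n N = n := eventually_ge_atTop N |>.mono fun n => max_eq_left
  refine ⟨fun n => a (max n N), fun n => b (max n N),
    ⟨fun n => (hN _ (le_max_right n N)).1, ?_, ha.comp hshift, hratio.comp hshift⟩,
    asymp_of_eventually (c₂ := c₂) hτ (fun n => ?_) hc₁ ?_⟩
  · filter_upwards [hdec, heq, eventually_ge_atTop N] with n hn hnN hN' using by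
      simp only [hnN, max_eq_left (hN'.trans n.le_succ), hn]
  · exact (mul_pos hc₁ (hτ _)).trans_le (hN _ (le_max_right n N)).2.1
  · filter_upwards [hbound, heq] with n hn hnN using by simpa only [hnN] using hn

lemma tPorous_of_eventually_notMem_Icc {E : Set ℝ} (hE : E ⊆ Ici 0) {τ : ℕ → ℝ}
    (hτ : τ ∈ E0d E) {c : ℝ} (hc : 1 ≤ c)
    (hband : ∀ M : ℝ, ∀ᶠ n in atTop, ∀ e ∈ E, e ∉ Icc (c * τ n) (M * τ n)) :
    TPorous E τ := by
  obtain ⟨hdec, hmem, hlim⟩ := hτ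
  have hpos : ∀ n, 0 < τ n := fun n => (hE (hmem n).1).lt_of_ne' (hmem n).2
  set a := fun n => lowerGapEnd E (c * τ n)
  set b := fun n => upperGapEnd E (c * τ n)
  have hτc : ∀ n, τ n ≤ c * τ n := fun n => le_mul_of_one_le_left (hpos n).le hc
  have hlo : ∀ n, (E ∩ Iic (c * τ n)).Nonempty := fun n => ⟨τ n, (hmem n).1, hτc n⟩
  have ha_ge : ∀ n, τ n ≤ a n := fun n => le_lowerGapEnd (hmem n).1 (hτc n)
  have ha_le : ∀ n, a n ≤ c * τ n := fun n => lowerGapEnd_le (hlo n)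
  have hcτ : Tendsto (fun n => c * τ n) atTop (𝓝 0) := by simpa using hlim.const_mul c
  have hhi : ∀ᶠ n in atTop, (E ∩ Ici (c * τ n)).Nonempty := by
    filter_upwards [hcτ.eventually (ge_mem_nhds (hpos 0))] with n hn using ⟨τ 0, (hmem 0).1, hn⟩
  have hb : ∀ M, ∀ᶠ n in atTop, M * τ n ≤ b n := fun M => by
    filter_upwards [hhi, hband M] with n hn hM using le_upperGapEnd hn hM
  have hb_pos : ∀ᶠ n in atTop, 0 < b n := by
    filter_upwards [hb 1] with n hn using (hpos n).trans_le (by simpa using hn)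
  have hcomp : ∀ᶠ n in atTop, IsCompExt E (a n) (b n) := by
    filter_upwards [hhi, hb (2 * c)] with n hn h2c
    refine isCompExt_lowerGapEnd_upperGapEnd hE (hlo n) hn ?_
    calc a n ≤ c * τ n := ha_le n
      _ < 2 * c * τ n := by nlinarith [hpos n]
      _ ≤ b n := h2c
  have hbτ : Tendsto (fun n => b n / τ n) atTop atTop :=
    tendsto_atTop.2 fun M => (hb M).mono fun n hn => (le_div_iff₀ (hpos n)).2 hn
  have hab : Tendsto (fun n => a n / b n) atTop (𝓝 0) := by
    refine squeeze_zero' ?_ ?_ (tendsto_const_nhds (x := c) |>.div_atTop hbτ)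
    · filter_upwards [hb_pos] with n hn using div_nonneg ((hpos n).le.trans (ha_ge n)) hn.le
    · filter_upwards [hb_pos] with n hn
      rw [div_div_eq_mul_div]
      exact div_le_div_of_nonneg_right (ha_le n) hn.le
  refine tPorous_of_eventually hpos hcomp ?_ ?_ ?_ one_pos (c₂ := c)
    (Eventually.of_forall fun n => ⟨by simpa using ha_ge n, ha_le n⟩)
  · filter_upwards [hdec] with n hn using
      lowerGapEnd_mono (hlo (n + 1)) (mul_le_mul_of_nonneg_left hn (by linarith))
  · exact squeeze_zero (fun n => (hpos n).le.trans (ha_ge n)) ha_le hcτ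
  · refine (by simpa using tendsto_const_nhds.sub hab : Tendsto (fun n => 1 - a n / b n) atTop
      (𝓝 1)).congr' ?_
    filter_upwards [hb_pos] with n hn
    rw [sub_div, div_self hn.ne']

theorem stmt_9_general (E : Set ℝ) (hE : E ⊆ Ici 0) (h0 : (0 : ℝ) ∈ E)
    (hfin : RstarN E (⟨0, h0⟩ : E) < ⊤) :
    CSP E := by
  intro τ hτ
  have hdist : ∀ e (he : e ∈ E), dist (⟨e, he⟩ : E) ⟨0, h0⟩ = e := fun e he => by
    rw [Subtype.dist_eq, Real.dist_0_eq_abs, abs_of_nonneg (hE he)]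
  set x : ℕ → E := fun n => ⟨τ n, (hτ.2.1 n).1⟩
  have hx : ∀ n, dist (x n) ⟨0, h0⟩ = τ n := fun n => hdist _ _
  refine tPorous_of_eventually_notMem_Icc hE hτ (c := (RstarN E ⟨0, h0⟩).toReal + 1)
    (by linarith [ENNReal.toReal_nonneg (a := RstarN E ⟨0, h0⟩)]) fun M => ?_
  have hpos : ∀ n, 0 < dist (x n) ⟨0, h0⟩ := fun n => by
    rw [hx]; exact (hE (hτ.2.1 n).1).lt_of_ne' (hτ.2.1 n).2
  have hband := eventually_dist_notMem_Icc hfin hpos (by simpa only [hx] using hτ.1)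
    (by simpa only [hx] using hτ.2.2) (lt_add_one _) M
  filter_upwards [hband] with n hn e he
  simpa only [hx, hdist] using hn ⟨e, he⟩

/-- If `0 ∈ E` is an accumulation point of `E ⊆ [0,∞)` and
`R*_n(E,0) < ∞`, then `E` is completely strongly porous at `0`. -/
theorem stmt_9 (E : Set ℝ) (hE : E ⊆ Ici 0) (h0 : (0 : ℝ) ∈ E)
    (hacc : AccPt (0 : ℝ) (Filter.principal E))
    (hfin : RstarN E (⟨0, h0⟩ : E) < ⊤) :
    CSP E :=
  stmt_9_general E hE h0 hfin
end

section
/- Let E ⊆ [0,∞) be completely strongly porous at 0. If L̃ ∈ Ĩ_E^d is universal, then M(L̃) = C_E. -/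
open Filter Topology Set
open scoped ENNReal

/-! Let `L̃ = ((lₙ, mₙ))` be universal, with `l` antitone from some index on.

`C_E ≤ M(L̃)` holds for every `L̃ ∈ Ĩ_Eᵈ`: a point `τₖ ∈ E` lying between `l_{n+1}` and `lₙ`
cannot lie in the gap `(l_{n+1}, m_{n+1})`, so `m_{n+1} ≤ τₖ ≤ lₙ`, and the intervals `(lₙ, mₙ)`
picked this way form a member of `Ĩ_Eᵈ(τ̃)` with `lₙ / τₖ ≤ lₙ / m_{n+1}`.

`M(L̃) ≤ C_E`: if `lₙ > r m_{n+1}` for infinitely many `n`, choose points of `E` just to the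
right of these `m_{n+1}` (they exist, since `m_{n+1}` is a boundary point of `E`) and take
running minima, to get `τ̃ ∈ Ẽ₀ᵈ(E)` with `l_{n+1} < τₖ < lₙ / r`. By universality every member
of `Ĩ_Eᵈ(τ̃)` has its left endpoints among the `lₙ`; such an endpoint `≥ τₖ > l_{n+1}` is
`≥ lₙ > r τₖ`, so `C(τ̃) ≥ r`.
-/

lemma pos_of_mem_E0d {E : Set ℝ} (hE : E ⊆ Ici 0) {τ : ℕ → ℝ} (hτ : τ ∈ E0d E) (k : ℕ) :
    0 < τ k :=
  (hE (hτ.2.1 k).1).lt_of_ne' (hτ.2.1 k).2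

lemma EvDecr.exists_antitoneOn {τ : ℕ → ℝ} (h : EvDecr τ) : ∃ N, AntitoneOn τ (Ici N) := by
  obtain ⟨N, hN⟩ := eventually_atTop.1 h
  exact ⟨N, antitoneOn_nat_Ici_of_succ_le hN⟩

namespace IsCompExt

variable {E : Set ℝ} {a b : ℝ}

lemma nonneg (h : IsCompExt E a b) : 0 ≤ a := by
  by_contra! hlt
  obtain ⟨x, hax, hx⟩ := exists_between (lt_min h.1 hlt)
  exact (lt_min_iff.1 hx).2.not_ge (interior_subset (h.2.1 ⟨hax, (lt_min_iff.1 hx).1⟩)).1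

lemma pos_right (h : IsCompExt E a b) : 0 < b := h.nonneg.trans_lt h.1

lemma avoid (h : IsCompExt E a b) {x : ℝ} (hx : x ∈ E) : x ∉ Ioo a b :=
  fun hmem => (interior_subset (h.2.1 hmem)).2 hx

lemma right_dense (h : IsCompExt E a b) {t : ℝ} (ht : b < t) : (E ∩ Ico b t).Nonempty := by
  by_contra hc
  have hsub : Ioo a t ⊆ Ici 0 \ E := by
    intro x hx
    rcases lt_or_ge x b with hxb | hxb
    · exact interior_subset (h.2.1 ⟨hx.1, hxb⟩)
    · exact ⟨h.pos_right.le.trans hxb, fun hxE => hc ⟨x, hxE, hxb, hx.2⟩⟩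
  have := (h.2.2 a t le_rfl ht.le (isOpen_Ioo.subset_interior_iff.2 hsub)).2
  linarith

lemma pos_of_mem_E0d (h : IsCompExt E a b) (hE : E ⊆ Ici 0) {τ : ℕ → ℝ} (hτ : τ ∈ E0d E) :
    0 < a := by
  refine h.nonneg.lt_of_ne fun ha => ?_
  obtain ⟨k, hk⟩ := (hτ.2.2.eventually (eventually_lt_nhds h.pos_right)).exists
  exact h.avoid (hτ.2.1 k).1 ⟨ha ▸ _root_.pos_of_mem_E0d hE hτ k, hk⟩

end IsCompExt

lemma exists_ge_lt_succ_le {α : Type*} [LinearOrder α] {u : ℕ → α} {N : ℕ} {t : α}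
    (hN : t ≤ u N) (h : ∀ᶠ n in atTop, u n < t) : ∃ n ≥ N, u (n + 1) < t ∧ t ≤ u n := by
  by_contra! H
  have hge : ∀ n ≥ N, t ≤ u n := fun n hn =>
    Nat.le_induction hN (fun n hn ih => le_of_not_gt fun h => (H n hn h).not_ge ih) n hn
  obtain ⟨n, hlt, hn⟩ := (h.and (eventually_ge_atTop N)).exists
  exact (hge n hn).not_gt hlt

lemma tendsto_atTop_of_tendsto_comp_nhdsNE {X : Type*} [TopologicalSpace X] [T1Space X]
    {u : ℕ → X} {f : ℕ → ℕ} {x : X} (h : Tendsto (u ∘ f) atTop (𝓝[≠] x)) :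
    Tendsto f atTop atTop := by
  refine tendsto_atTop.2 fun b => ?_
  have hne : ∀ i ∈ Finset.range b, ∀ᶠ j in atTop, f j ≠ i := by
    intro i _
    have hui : ∀ᶠ y in 𝓝[≠] x, y ≠ u i := by
      rcases eq_or_ne x (u i) with hx | hx
      · exact hx ▸ self_mem_nhdsWithin
      · exact eventually_ne_nhdsWithin hx
    exact (h.eventually hui).mono fun j hj hji => hj (congrArg u hji)
  filter_upwards [(Finset.range b).eventually_all.2 hne] with j hj
  by_contra! hjb
  exact hj (f j) (Finset.mem_range.2 hjb) rfl

lemma exists_antitone_le_eq {α : Type*} [LinearOrder α] (σ : ℕ → α) :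
    ∃ τ : ℕ → α, Antitone τ ∧ (∀ k, τ k ≤ σ k) ∧ ∀ k, ∃ i ≤ k, τ k = σ i := by
  refine ⟨fun k => (Finset.range (k + 1)).inf' Finset.nonempty_range_add_one σ,
    fun i j hij => Finset.inf'_mono σ (Finset.range_subset_range.2 (by omega)) _,
    fun k => Finset.inf'_le σ (Finset.self_mem_range_succ k), fun k => ?_⟩
  obtain ⟨i, hi, heq⟩ := Finset.exists_mem_eq_inf' Finset.nonempty_range_add_one σ
  exact ⟨i, Nat.lt_succ_iff.1 (Finset.mem_range.1 hi), heq⟩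

section Gaps

variable {E : Set ℝ} {l m : ℕ → ℝ}

theorem Ctau_le_MQ (hE : E ⊆ Ici 0) (hl : IEd E l m) {τ : ℕ → ℝ} (hτ : τ ∈ E0d E) :
    Ctau E τ ≤ MQ l m := by
  obtain ⟨hcomp, hdecr, hl0, hratio⟩ := hl
  obtain ⟨N, hanti⟩ := hdecr.exists_antitoneOn
  have hτpos := pos_of_mem_E0d hE hτ
  have hlpos : ∀ n, 0 < l n := fun n => (hcomp n).pos_of_mem_E0d hE hτ
  have hbracket : ∀ᶠ k in atTop, ∃ n ≥ N, l (n + 1) < τ k ∧ τ k ≤ l n := by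
    filter_upwards [hτ.2.2.eventually (eventually_le_nhds (hlpos N))] with k hk
    exact exists_ge_lt_succ_le hk (hl0.eventually (eventually_lt_nhds (hτpos k)))
  obtain ⟨g, hg⟩ := hbracket.choice
  have hm_le : ∀ᶠ k in atTop, m (g k + 1) ≤ τ k := hg.mono fun k hk =>
    not_lt.1 fun h => (hcomp _).avoid (hτ.2.1 k).1 ⟨hk.2.1, h⟩
  have hg_top : Tendsto g atTop atTop := by
    refine tendsto_atTop.2 fun b => ?_
    filter_upwards [hg, hτ.2.2.eventually (eventually_lt_nhds (hlpos (max b N)))] with k hk hkb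
    have := hanti.reflect_lt (mem_Ici.2 (by omega)) (mem_Ici.2 (le_max_right b N))
      (hk.2.1.trans hkb)
    omega
  have hsub : IEd E (l ∘ g) (m ∘ g) := by
    refine ⟨fun k => hcomp (g k), ?_, hl0.comp hg_top, hratio.comp hg_top⟩
    filter_upwards [hg, (tendsto_add_atTop_nat 1).eventually hg, hτ.1] with k hk hk1 hτk
    have hgk : g k < g (k + 1) + 1 :=
      hanti.reflect_lt (mem_Ici.2 (by omega)) (mem_Ici.2 hk.1) (hk1.2.1.trans_le (hτk.trans hk.2.2))
    exact hanti hk.1 hk1.1 (Nat.lt_succ_iff.1 hgk)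
  calc Ctau E τ ≤ limsup (fun k => ENNReal.ofReal (l (g k) / τ k)) atTop :=
        sInf_le ⟨_, _, hsub, hg.mono fun k hk => hk.2.2, rfl⟩
    _ ≤ limsup (fun k => ENNReal.ofReal (l (g k) / m (g k + 1))) atTop := by
        refine limsup_le_limsup (hm_le.mono fun k hk => ENNReal.ofReal_le_ofReal ?_)
        exact div_le_div_of_nonneg_left (hcomp _).nonneg (hcomp _).pos_right hk
    _ ≤ MQ l m :=
        (limsup_comp (fun n => ENNReal.ofReal (l n / m (n + 1))) g atTop).trans_le
          (limsup_le_limsup_of_le hg_top)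

theorem CE_le_MQ (hE : E ⊆ Ici 0) (hl : IEd E l m) : CE E ≤ MQ l m :=
  sSup_le fun _ ⟨_, hτ, hv⟩ => hv ▸ Ctau_le_MQ hE hl hτ

variable {N : ℕ} {φ : ℕ → ℕ} {r : ℝ}

lemma exists_mem_E0d_between (hcomp : ∀ n, IsCompExt E (l n) (m n))
    (hl0 : Tendsto l atTop (𝓝 0)) (hanti : AntitoneOn l (Ici N)) (hφ : StrictMono φ)
    (hφN : ∀ k, N ≤ φ k) (hr : 0 < r) (hratio : ∀ k, r * m (φ k + 1) < l (φ k)) :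
    ∃ τ ∈ E0d E, ∀ k, l (φ k + 1) < τ k ∧ r * τ k < l (φ k) := by
  have hσ : ∀ k, ∃ s ∈ E, m (φ k + 1) ≤ s ∧ r * s < l (φ k) := by
    intro k
    obtain ⟨s, hsE, hs⟩ := (hcomp (φ k + 1)).right_dense (t := l (φ k) / r)
      (by rw [lt_div_iff₀ hr, mul_comm]; exact hratio k)
    exact ⟨s, hsE, hs.1, by rw [mul_comm, ← lt_div_iff₀ hr]; exact hs.2⟩
  choose σ hσE hσlb hσub using hσ
  obtain ⟨τ, hτanti, hτle, hτeq⟩ := exists_antitone_le_eq σ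
  have hlow : ∀ k, l (φ k + 1) < τ k := by
    intro k
    obtain ⟨i, hik, hi⟩ := hτeq k
    calc l (φ k + 1) ≤ l (φ i + 1) :=
          hanti (mem_Ici.2 (by have := hφN i; omega)) (mem_Ici.2 (by have := hφN k; omega))
            (by have := hφ.monotone hik; omega)
      _ < m (φ i + 1) := (hcomp _).1
      _ ≤ τ k := hi ▸ hσlb i
  have hup : ∀ k, r * τ k < l (φ k) := fun k =>
    (mul_le_mul_of_nonneg_left (hτle k) hr.le).trans_lt (hσub k)
  have hτpos : ∀ k, 0 < τ k := fun k => (hcomp _).nonneg.trans_lt (hlow k)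
  refine ⟨τ, ⟨Eventually.of_forall fun k => hτanti k.le_succ, fun k => ?_, ?_⟩,
    fun k => ⟨hlow k, hup k⟩⟩
  · obtain ⟨i, -, hi⟩ := hτeq k
    exact ⟨hi ▸ hσE i, (hτpos k).ne'⟩
  · have hbound : Tendsto (fun k => l (φ k) / r) atTop (𝓝 0) := by
      simpa using (hl0.comp hφ.tendsto_atTop).div_const r
    refine tendsto_of_tendsto_of_tendsto_of_le_of_le tendsto_const_nhds hbound
      (fun k => (hτpos k).le) fun k => ?_
    rw [le_div_iff₀ hr, mul_comm]
    exact (hup k).le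

lemma ofReal_le_Ctau (hu : UnivElem E l m) (hanti : AntitoneOn l (Ici N)) (hφN : ∀ k, N ≤ φ k)
    {τ : ℕ → ℝ} (hlow : ∀ k, l (φ k + 1) < τ k) (hup : ∀ k, r * τ k < l (φ k)) :
    ENNReal.ofReal r ≤ Ctau E τ := by
  have hτpos : ∀ k, 0 < τ k := fun k => (hu.1.1 _).nonneg.trans_lt (hlow k)
  refine le_sInf ?_
  rintro v ⟨a, b, hab, hτa, rfl⟩
  obtain ⟨N₁, f, hf⟩ := hu.2 a b hab
  have hfa : ∀ᶠ j in atTop, a j = l (f j) := eventually_atTop.2 ⟨N₁, hf⟩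
  have hf_top : Tendsto f atTop atTop := by
    refine tendsto_atTop_of_tendsto_comp_nhdsNE (u := l) (x := 0) ?_
    refine tendsto_nhdsWithin_iff.2 ⟨hab.2.2.1.congr' hfa, ?_⟩
    filter_upwards [hfa, hτa] with j hj hτj
    exact (hj ▸ (hτpos j).trans_le hτj).ne'
  refine le_limsup_of_frequently_le (Eventually.frequently ?_)
  filter_upwards [hfa, hτa, hf_top.eventually_ge_atTop N] with j hj hτj hfj
  have hfφ : f j < φ j + 1 :=
    hanti.reflect_lt (mem_Ici.2 (by have := hφN j; omega)) (mem_Ici.2 hfj)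
      ((hlow j).trans_le (hτj.trans_eq hj))
  have hla : l (φ j) ≤ a j := hj ▸ hanti (mem_Ici.2 hfj) (mem_Ici.2 (hφN j)) (by omega)
  refine ENNReal.ofReal_le_ofReal ?_
  rw [le_div_iff₀ (hτpos j)]
  linarith [hup j]

theorem MQ_le_CE (hu : UnivElem E l m) : MQ l m ≤ CE E := by
  obtain ⟨N, hanti⟩ := hu.1.2.1.exists_antitoneOn
  refine le_of_forall_lt fun z hz => ?_
  obtain ⟨r, -, hzr, hrM⟩ := ENNReal.lt_iff_exists_real_btwn.1 hz
  have hr : 0 < r := ENNReal.ofReal_pos.1 (zero_le.trans_lt hzr)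
  obtain ⟨φ, hφ, hφr⟩ := extraction_of_frequently_atTop
    ((frequently_lt_of_lt_limsup (by isBoundedDefault) hrM).and_eventually (eventually_ge_atTop N))
  have hratio : ∀ k, r * m (φ k + 1) < l (φ k) := fun k => by
    rw [← lt_div_iff₀ (hu.1.1 _).pos_right]
    exact (ENNReal.ofReal_lt_ofReal_iff'.1 (hφr k).1).1
  obtain ⟨τ, hτ, hτb⟩ := exists_mem_E0d_between hu.1.1 hu.1.2.2.1 hanti hφ (fun k => (hφr k).2)
    hr hratio
  exact hzr.trans_le ((ofReal_le_Ctau hu hanti (fun k => (hφr k).2) (fun k => (hτb k).1)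
    fun k => (hτb k).2).trans (le_sSup ⟨τ, hτ, rfl⟩))

end Gaps

theorem stmt_11_general (E : Set ℝ) (hE : E ⊆ Ici 0) (l m : ℕ → ℝ)
    (hu : UnivElem E l m) : MQ l m = CE E :=
  le_antisymm (MQ_le_CE hu) (CE_le_MQ hE hu.1)

/-- If `E` is completely strongly porous at `0` and `L̃ ∈ Ĩ_Eᵈ` is
universal, then `M(L̃) = C_E`. -/
theorem stmt_11 (E : Set ℝ) (hE : E ⊆ Ici 0) (hcsp : CSP E) (l m : ℕ → ℝ)
    (hu : UnivElem E l m) : MQ l m = CE E :=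
  stmt_11_general E hE l m hu
end
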